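/- arXiv:2404.16684 — 2 statements merged into one kernel-verified Lean document; each statement's English description precedes it below -/
import Mathlib

section
/- Let W be a finite-dimensional real inner product space with inner product a(·,·), and let W₁, …, W_J ⊆ W be subspaces with W = W₁ + ⋯ + W_J. Suppose every w ∈ W admits a decomposition w = Σⱼ wⱼ with wⱼ ∈ Wⱼ and Σⱼ a(wⱼ,wⱼ) ≤ C₀ a(w,w). Let Pⱼ : W → Wⱼ be the a-orthogonal projection onto Wⱼ and P = Σⱼ Pⱼ. Then a(P w, w) ≥ C₀⁻¹ a(w,w) for all w ∈ W; i.e., the minimal eigenvalue of the additive Schwarz operator is bounded below by the inverse of the stable-decomposition constant. -/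
open RealInnerProductSpace

/-- Lions' lemma: if every `w` admits a stable decomposition into the subspaces
`Wⱼ` with constant `C₀`, then the additive Schwarz operator `P = Σⱼ Pⱼ`
satisfies `a(P w, w) ≥ C₀⁻¹ a(w, w)` (lower bound of Theorem 4.11). -/
theorem stmt7
    {W : Type*} [NormedAddCommGroup W] [InnerProductSpace ℝ W] [FiniteDimensional ℝ W]
    (J : ℕ) (Wsub : Fin J → Submodule ℝ W)
    (hspan : ∀ w : W, w ∈ ⨆ j, Wsub j)
    (C₀ : ℝ) (hC₀ : 0 < C₀)
    (hstable : ∀ w : W, ∃ d : Fin J → W, (∀ j, d j ∈ Wsub j) ∧ (∑ j, d j) = w ∧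
      ∑ j, ⟪d j, d j⟫ ≤ C₀ * ⟪w, w⟫)
    (P : Fin J → W →ₗ[ℝ] W)
    (hPmem : ∀ j (w : W), P j w ∈ Wsub j)
    (hPproj : ∀ j (w : W), ∀ φ ∈ Wsub j, ⟪P j w, φ⟫ = ⟪w, φ⟫)
    (w : W) :
    C₀⁻¹ * ⟪w, w⟫ ≤ ⟪∑ j, P j w, w⟫ := by
  obtain ⟨d, hd, hsum, hstab⟩ := hstable w
  have h1 : ⟪w, w⟫ = ∑ j, ⟪P j w, d j⟫ := by
    rw [show (∑ j, ⟪P j w, d j⟫) = ∑ j, ⟪w, d j⟫ from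
      Finset.sum_congr rfl fun j _ => hPproj j w (d j) (hd j), ← inner_sum, hsum]
  have hS : ⟪∑ j, P j w, w⟫ = ∑ j, ⟪P j w, P j w⟫ := by
    rw [sum_inner]
    refine Finset.sum_congr rfl fun j _ => ?_
    rw [real_inner_comm]
    exact (hPproj j w (P j w) (hPmem j w)).symm
  have hCS : (∑ j, ⟪P j w, d j⟫) ^ 2 ≤ (∑ j, ⟪P j w, P j w⟫) * ∑ j, ⟪d j, d j⟫ := by
    calc (∑ j, ⟪P j w, d j⟫) ^ 2 ≤ (∑ j, ‖P j w‖ * ‖d j‖) ^ 2 := by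
          rw [← sq_abs]
          have h2 : |∑ j, ⟪P j w, d j⟫| ≤ ∑ j, ‖P j w‖ * ‖d j‖ :=
            (Finset.abs_sum_le_sum_abs _ _).trans
              (Finset.sum_le_sum fun j _ => abs_real_inner_le_norm _ _)
          have h3 : (0:ℝ) ≤ ∑ j, ‖P j w‖ * ‖d j‖ :=
            Finset.sum_nonneg fun j _ => mul_nonneg (norm_nonneg _) (norm_nonneg _)
          exact pow_le_pow_left₀ (abs_nonneg _) h2 2
      _ ≤ (∑ j, ‖P j w‖ ^ 2) * ∑ j, ‖d j‖ ^ 2 :=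
          Finset.sum_mul_sq_le_sq_mul_sq _ _ _
      _ = (∑ j, ⟪P j w, P j w⟫) * ∑ j, ⟪d j, d j⟫ := by
          simp [real_inner_self_eq_norm_sq]
  have hSnn : 0 ≤ ∑ j, ⟪P j w, P j w⟫ :=
    Finset.sum_nonneg fun j _ => real_inner_self_nonneg
  rw [hS]
  rcases eq_or_lt_of_le (real_inner_self_nonneg (x := w)) with h0 | h0
  · rw [← h0, mul_zero]
    exact hSnn
  · have key : ⟪w, w⟫ ^ 2 ≤ (∑ j, ⟪P j w, P j w⟫) * (C₀ * ⟪w, w⟫) := by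
      calc ⟪w, w⟫ ^ 2 = (∑ j, ⟪P j w, d j⟫) ^ 2 := by rw [h1]
        _ ≤ (∑ j, ⟪P j w, P j w⟫) * ∑ j, ⟪d j, d j⟫ := hCS
        _ ≤ (∑ j, ⟪P j w, P j w⟫) * (C₀ * ⟪w, w⟫) := by
            exact mul_le_mul_of_nonneg_left hstab hSnn
    rw [inv_mul_le_iff₀ hC₀]
    nlinarith [h0, hC₀]
end

section
/- Let W be a finite-dimensional real inner product space with inner product a, and let P₀, P₁, …, P_J : W → W be a-orthogonal projections onto subspaces covering W in the sense that the additive operator P = Σⱼ Pⱼ satisfies a(P w, w) ≥ c₀ a(w,w) with c₀ > 0, together with a bound a(P w, w) ≤ c₁ a(w,w). Then the multiplicative error operator E = (I − P_J)⋯(I − P₁)(I − P₀) satisfies ‖E‖_a < 1, i.e., there exists δ < 1 with a(E w, E w) ≤ δ² a(w,w) for all w. -/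
open RealInnerProductSpace

/-- If the additive Schwarz operator `P = Σⱼ Pⱼ` built from `a`-orthogonal
projections onto covering subspaces satisfies two-sided bounds
`c₀ a(w,w) ≤ a(Pw,w) ≤ c₁ a(w,w)`, then the multiplicative error operator
`E = (I − P_J)⋯(I − P₁)(I − P₀)` is a uniform contraction in the `a`-norm
(abstracting Theorem 4.10). -/
theorem stmt11
    {W : Type*} [NormedAddCommGroup W] [InnerProductSpace ℝ W] [FiniteDimensional ℝ W]
    (J : ℕ) (Wsub : Fin (J + 1) → Submodule ℝ W)
    (hcover : (⨆ j, Wsub j) = ⊤)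
    (P : Fin (J + 1) → W →ₗ[ℝ] W)
    (hPmem : ∀ j (w : W), P j w ∈ Wsub j)
    (hPproj : ∀ j (w : W), ∀ φ ∈ Wsub j, ⟪P j w, φ⟫ = ⟪w, φ⟫)
    (c₀ c₁ : ℝ) (hc₀ : 0 < c₀) (hc₁ : 0 < c₁)
    (hlower : ∀ w : W, c₀ * ⟪w, w⟫ ≤ ⟪∑ j, P j w, w⟫)
    (hupper : ∀ w : W, ⟪∑ j, P j w, w⟫ ≤ c₁ * ⟪w, w⟫)
    (E : W →ₗ[ℝ] W)
    (hE : E = (List.ofFn fun j : Fin (J + 1) =>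
      (LinearMap.id : W →ₗ[ℝ] W) - P j).foldl (fun M Q => Q ∘ₗ M) LinearMap.id) :
    ∃ δ : ℝ, 0 ≤ δ ∧ δ < 1 ∧ ∀ w : W, ⟪E w, E w⟫ ≤ δ ^ 2 * ⟪w, w⟫ := by
  classical
  -- Pythagoras for each factor I - P j
  have hPnorm : ∀ j (v : W), ‖v - P j v‖ ^ 2 = ‖v‖ ^ 2 - ‖P j v‖ ^ 2 := by
    intro j v
    have h1 : ⟪P j v, P j v⟫ = ⟪v, P j v⟫ := hPproj j v (P j v) (hPmem j v)
    have h2 : ⟪v - P j v, v - P j v⟫ = ⟪v, v⟫ - ⟪P j v, P j v⟫ := by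
      have hcomm : ⟪P j v, v⟫ = ⟪v, P j v⟫ := real_inner_comm _ _
      simp only [inner_sub_left, inner_sub_right]
      linarith
    have e1 : ⟪v - P j v, v - P j v⟫ = ‖v - P j v‖ ^ 2 := real_inner_self_eq_norm_sq _
    have e2 : ⟪v, v⟫ = ‖v‖ ^ 2 := real_inner_self_eq_norm_sq _
    have e3 : ⟪P j v, P j v⟫ = ‖P j v‖ ^ 2 := real_inner_self_eq_norm_sq _
    linarith [h2, e1.symm, e2.symm, e3.symm]
  -- each factor is nonexpansive, with equality only at fixed points
  have hfac : ∀ q ∈ (List.ofFn fun j : Fin (J + 1) =>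
      (LinearMap.id : W →ₗ[ℝ] W) - P j),
      ∀ v : W, ‖q v‖ ≤ ‖v‖ ∧ (‖q v‖ = ‖v‖ → q v = v) := by
    intro q hq v
    obtain ⟨j, rfl⟩ := List.mem_ofFn.mp hq
    have happ : ((LinearMap.id : W →ₗ[ℝ] W) - P j) v = v - P j v := rfl
    constructor
    · rw [happ]
      have h := hPnorm j v
      have hsq : ‖v - P j v‖ ^ 2 ≤ ‖v‖ ^ 2 := by
        have := sq_nonneg ‖P j v‖; linarith
      exact le_of_pow_le_pow_left₀ two_ne_zero (norm_nonneg _) hsq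
    · intro heq
      rw [happ] at heq ⊢
      have h := hPnorm j v
      rw [heq] at h
      have : ‖P j v‖ ^ 2 = 0 := by linarith
      have hP0 : P j v = 0 := by
        have := pow_eq_zero_iff (n := 2) two_ne_zero |>.mp this
        exact norm_eq_zero.mp this
      rw [hP0, sub_zero]
  -- foldl composition applies like composition
  have comp_apply : ∀ (L : List (W →ₗ[ℝ] W)) (M : W →ₗ[ℝ] W) (w : W),
      (L.foldl (fun M Q => Q ∘ₗ M) M) w
        = (L.foldl (fun M Q => Q ∘ₗ M) LinearMap.id) (M w) := by
    intro L
    induction L with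
    | nil => intro M w; simp
    | cons q L ih =>
      intro M w
      simp only [List.foldl_cons]
      rw [ih (q ∘ₗ M), ih (q ∘ₗ LinearMap.id)]
      simp
  -- key contraction lemma for lists of such factors
  have key : ∀ (L : List (W →ₗ[ℝ] W)),
      (∀ q ∈ L, ∀ v : W, ‖q v‖ ≤ ‖v‖ ∧ (‖q v‖ = ‖v‖ → q v = v)) →
      ∀ w : W, ‖(L.foldl (fun M Q => Q ∘ₗ M) LinearMap.id) w‖ ≤ ‖w‖ ∧
        (‖(L.foldl (fun M Q => Q ∘ₗ M) LinearMap.id) w‖ = ‖w‖ → ∀ q ∈ L, q w = w) := by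
    intro L
    induction L with
    | nil => intro _ w; simp
    | cons q L ih =>
      intro hL w
      have hq := hL q List.mem_cons_self
      have hL' : ∀ q' ∈ L, ∀ v : W, ‖q' v‖ ≤ ‖v‖ ∧ (‖q' v‖ = ‖v‖ → q' v = v) :=
        fun q' hq' => hL q' (List.mem_cons_of_mem _ hq')
      have hfold : ((q :: L).foldl (fun M Q => Q ∘ₗ M) LinearMap.id) w
          = (L.foldl (fun M Q => Q ∘ₗ M) LinearMap.id) (q w) := by
        simp only [List.foldl_cons]
        rw [comp_apply]
        simp
      have h1 := (ih hL' (q w)).1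
      constructor
      · rw [hfold]; exact h1.trans (hq w).1
      · intro heq q' hq'
        rw [hfold] at heq
        have hle : ‖q w‖ ≤ ‖w‖ := (hq w).1
        have heqq : ‖q w‖ = ‖w‖ := le_antisymm hle (by rw [← heq]; exact h1)
        have hfix : q w = w := (hq w).2 heqq
        rcases List.mem_cons.mp hq' with rfl | hq''
        · exact hfix
        · rw [hfix] at heq
          exact (ih hL' w).2 heq q' hq''
  have hEkey := key _ hfac
  -- strict contraction on nonzero vectors
  have hstrict : ∀ w : W, w ≠ 0 → ‖E w‖ < ‖w‖ := by
    intro w hw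
    rw [hE]
    rcases lt_or_eq_of_le ((hEkey w).1) with h | h
    · exact h
    · exfalso
      have hfix := (hEkey w).2 h
      have hP0 : ∀ j, P j w = 0 := by
        intro j
        have hmem : ((LinearMap.id : W →ₗ[ℝ] W) - P j) ∈
            (List.ofFn fun j : Fin (J + 1) => (LinearMap.id : W →ₗ[ℝ] W) - P j) :=
          List.mem_ofFn.mpr ⟨j, rfl⟩
        have := hfix _ hmem
        have happ : ((LinearMap.id : W →ₗ[ℝ] W) - P j) w = w - P j w := rfl
        rw [happ] at this
        have := sub_eq_self.mp this
        exact this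
      have hsum : (∑ j, P j w) = 0 := by
        simp [hP0]
      have := hlower w
      rw [hsum, inner_zero_left] at this
      have hpos : 0 < ⟪w, w⟫ := by
        rw [real_inner_self_eq_norm_sq]
        exact pow_pos (norm_pos_iff.mpr hw) 2
      nlinarith
  -- trivial space case
  rcases subsingleton_or_nontrivial W with hW | hW
  · refine ⟨1/2, by norm_num, by norm_num, fun w => ?_⟩
    have hw : w = 0 := Subsingleton.elim _ _
    subst hw
    simp
  -- nontrivial: use compactness of the sphere
  have hcont : Continuous fun w : W => ‖E w‖ :=
    (E.continuous_of_finiteDimensional).norm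
  obtain ⟨x, hx, hmax⟩ := (isCompact_sphere (0 : W) 1).exists_isMaxOn
    (NormedSpace.sphere_nonempty.mpr zero_le_one) hcont.continuousOn
  have hxn : ‖x‖ = 1 := by simpa using hx
  have hx0 : x ≠ 0 := by
    intro h; rw [h, norm_zero] at hxn; norm_num at hxn
  refine ⟨‖E x‖, norm_nonneg _, ?_, ?_⟩
  · have := hstrict x hx0
    rwa [hxn] at this
  · intro w
    rcases eq_or_ne w 0 with rfl | hw
    · simp
    · have hwn : ‖w‖ ≠ 0 := norm_ne_zero_iff.mpr hw
      have h1 : ‖w‖⁻¹ • w ∈ Metric.sphere (0 : W) 1 := by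
        simp [norm_smul, abs_of_nonneg (inv_nonneg.mpr (norm_nonneg w)),
          inv_mul_cancel₀ hwn]
      have h2 : ‖E (‖w‖⁻¹ • w)‖ ≤ ‖E x‖ := hmax h1
      have h3 : ‖E (‖w‖⁻¹ • w)‖ = ‖w‖⁻¹ * ‖E w‖ := by
        rw [map_smul, norm_smul]
        simp [abs_of_nonneg (inv_nonneg.mpr (norm_nonneg w))]
      have hbound : ‖E w‖ ≤ ‖E x‖ * ‖w‖ := by
        rw [h3] at h2
        have hpos : 0 < ‖w‖ := norm_pos_iff.mpr hw
        calc ‖E w‖ = (‖w‖⁻¹ * ‖E w‖) * ‖w‖ := by field_simp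
          _ ≤ ‖E x‖ * ‖w‖ := by
              apply mul_le_mul_of_nonneg_right h2 (norm_nonneg w)
      rw [real_inner_self_eq_norm_sq, real_inner_self_eq_norm_sq]
      calc ‖E w‖ ^ 2 ≤ (‖E x‖ * ‖w‖) ^ 2 :=
            pow_le_pow_left₀ (norm_nonneg _) hbound 2
        _ = ‖E x‖ ^ 2 * ‖w‖ ^ 2 := by ring
end
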